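/- (Split conformal coverage.) Let S₁, …, S_{m+1} be exchangeable real-valued random variables, δ ∈ (0,1), and let q̂ be the ⌈(m+1)(1−δ)⌉-th smallest value among S₁, …, S_m (with q̂ = +∞ if ⌈(m+1)(1−δ)⌉ > m). Then P(S_{m+1} ≤ q̂) ≥ 1 − δ. -/

import Mathlib

/-!
Let `r_j` be the number of scores strictly below `S_j` and `k = ⌈(m+1)(1-δ)⌉`; for `k > m` there is
nothing to prove. For `1 ≤ k ≤ m`, `S_{m+1}` is at most the `k`-th smallest calibration score
exactly when `r_{m+1} < k`. For every realisation at least `k` of the `m + 1` indices satisfy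
`r_j < k`, and by exchangeability all events `{r_j < k}` have the same probability, so
`(m + 1) P(r_{m+1} < k) ≥ k ≥ (m + 1)(1 - δ)`.
-/

open MeasureTheory

/-- The `k`-th smallest value (k ≥ 1) among the entries of `v : Fin m → ℝ`. -/
noncomputable def kthSmallest {m : ℕ} (v : Fin m → ℝ) (k : ℕ) : ℝ :=
  (List.insertionSort (· ≤ ·) (List.ofFn v)).getD (k - 1) 0

open Finset
open scoped ENNReal

lemma List.countP_ofFn {α : Type*} {n : ℕ} (v : Fin n → α) (p : α → Prop) [DecidablePred p] :
    (List.ofFn v).countP p = #{i | p (v i)} := by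
  rw [← Multiset.coe_countP, ← Fin.univ_val_map, Multiset.countP_map]
  rfl

lemma List.Pairwise.le_getElem_iff_countP_le {α : Type*} [LinearOrder α] {l : List α}
    (hl : l.Pairwise (· ≤ ·)) {i : ℕ} (hi : i < l.length) (x : α) :
    x ≤ l[i] ↔ l.countP (· < x) ≤ i := by
  have hprefix : ∀ a b : Fin l.length, b ≤ a → l[a] < x → l[b] < x :=
    fun a b hba hax => (hl.rel_get_of_le hba).trans_lt hax
  have hcount := List.countP_ofFn l.get (· < x)
  rw [List.ofFn_get] at hcount
  rw [hcount, ← not_lt, ← not_lt]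
  exact not_congr (Fin.lt_card_filter_univ_iff_apply_of_imp (j := ⟨i, hi⟩) _ hprefix).symm

lemma le_kthSmallest_iff {m : ℕ} (v : Fin m → ℝ) {k : ℕ} (hk : 1 ≤ k) (hkm : k ≤ m) (x : ℝ) :
    x ≤ kthSmallest v k ↔ #{i | v i < x} < k := by
  have hlen : k - 1 < (List.insertionSort (· ≤ ·) (List.ofFn v)).length := by simp; omega
  rw [kthSmallest, List.getD_eq_getElem _ _ hlen,
    (List.pairwise_insertionSort _ _).le_getElem_iff_countP_le hlen,
    (List.perm_insertionSort _ _).countP_eq, List.countP_ofFn]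
  omega

section StrictRank

variable {ι α : Type*} [Fintype ι] [LinearOrder α]

def strictRank (s : ι → α) (j : ι) : ℕ := #{i | s i < s j}

lemma strictRank_comp_perm (s : ι → α) (σ : Equiv.Perm ι) (j : ι) :
    strictRank (s ∘ σ) j = strictRank s (σ j) :=
  card_equiv σ (by simp)

lemma le_card_strictRank_lt (s : ι → α) {k : ℕ} (hk : k ≤ Fintype.card ι) :
    k ≤ #{j | strictRank s j < k} := by
  classical
  by_contra! hcard
  set T : Finset ι := {j | strictRank s j < k}
  have hTc : Tᶜ.Nonempty := by
    rw [nonempty_iff_ne_empty, Ne, compl_eq_empty_iff]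
    intro hT
    rw [hT, card_univ] at hcard
    omega
  -- a smallest entry outside `T` has only entries of `T` below it, so it belongs to `T`
  obtain ⟨j, hjT, hmin⟩ := exists_min_image _ s hTc
  have hbelow : ({i | s i < s j} : Finset ι) ⊆ T := fun i hi => by
    by_contra hiT
    exact (hmin i (mem_compl.2 hiT)).not_gt (mem_filter.1 hi).2
  exact mem_compl.1 hjT (mem_filter.2 ⟨mem_univ j, (card_le_card hbelow).trans_lt hcard⟩)

lemma strictRank_last {m : ℕ} (s : Fin (m + 1) → α) :
    strictRank s (Fin.last m) = #{i : Fin m | s i.castSucc < s (Fin.last m)} := by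
  rw [strictRank, Fin.univ_castSuccEmb, filter_cons, if_neg (lt_irrefl _), filter_map, card_map]
  rfl

end StrictRank

lemma measurableSet_strictRank_lt {ι : Type*} [Fintype ι] (j : ι) (k : ℕ) :
    MeasurableSet {s : ι → ℝ | strictRank s j < k} := by
  have hrank : Measurable fun s : ι → ℝ => strictRank s j := by
    simp only [strictRank, card_filter]
    exact Finset.measurable_sum _ fun i _ => Measurable.ite
      (measurableSet_lt (measurable_pi_apply i) (measurable_pi_apply j)) measurable_const
      measurable_const
  exact hrank measurableSet_Iio

section Averaging

variable {Ω ι : Type*} [MeasurableSpace Ω] {μ : Measure Ω}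

lemma mul_measure_univ_le_sum_measure [Fintype ι] {A : ι → Set Ω}
    [∀ i ω, Decidable (ω ∈ A i)] (hA : ∀ i, MeasurableSet (A i)) {k : ℕ}
    (hcover : ∀ ω, k ≤ #{i | ω ∈ A i}) :
    k * μ Set.univ ≤ ∑ i, μ (A i) :=
  calc k * μ Set.univ = ∫⁻ _, (k : ℝ≥0∞) ∂μ := (lintegral_const _).symm
    _ ≤ ∫⁻ ω, ∑ i, (A i).indicator 1 ω ∂μ := lintegral_mono fun ω => by
      have hω := hcover ω
      rw [card_filter] at hω
      simp only [Set.indicator_apply, Pi.one_apply]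
      exact_mod_cast hω
    _ = ∑ i, μ (A i) := by
      rw [lintegral_finsetSum _ fun i _ => measurable_one.indicator (hA i)]
      simp only [lintegral_indicator_one (hA _)]

def Exchangeable {β : Type*} [MeasurableSpace β] (μ : Measure Ω) (S : ι → Ω → β) : Prop :=
  ∀ σ : Equiv.Perm ι, μ.map (fun ω => fun i => S (σ i) ω) = μ.map (fun ω => fun i => S i ω)

namespace Exchangeable

variable [Fintype ι] {S : ι → Ω → ℝ}

lemma measure_strictRank_lt_eq (hexch : Exchangeable μ S) (hS : ∀ i, Measurable (S i))
    (j j' : ι) (k : ℕ) :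
    μ {ω | strictRank (S · ω) j < k} = μ {ω | strictRank (S · ω) j' < k} := by
  classical
  let σ := Equiv.swap j' j
  have hpre : {ω | strictRank (S · ω) j < k} =
      (fun ω i => S (σ i) ω) ⁻¹' {s | strictRank s j' < k} := by
    ext ω
    simp only [Set.mem_ofPred_eq, Set.mem_preimage]
    rw [← Function.comp_def (fun i => S i ω) σ, strictRank_comp_perm, Equiv.swap_apply_left]
  rw [hpre, ← Measure.map_apply (measurable_pi_lambda _ fun i => hS (σ i))
    (measurableSet_strictRank_lt j' k), hexch σ,
    Measure.map_apply (measurable_pi_lambda _ hS) (measurableSet_strictRank_lt j' k)]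
  rfl

lemma mul_measure_univ_le_card_mul_measure_strictRank_lt (hexch : Exchangeable μ S)
    (hS : ∀ i, Measurable (S i)) (j : ι) {k : ℕ} (hk : k ≤ Fintype.card ι) :
    k * μ Set.univ ≤ Fintype.card ι * μ {ω | strictRank (S · ω) j < k} :=
  calc k * μ Set.univ ≤ ∑ i, μ {ω | strictRank (S · ω) i < k} :=
        mul_measure_univ_le_sum_measure (A := fun i => {ω | strictRank (S · ω) i < k})
          (fun i => (measurableSet_strictRank_lt i k).preimage (measurable_pi_lambda _ hS))
          fun ω => le_card_strictRank_lt _ hk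
    _ = Fintype.card ι * μ {ω | strictRank (S · ω) j < k} := by
      simp only [hexch.measure_strictRank_lt_eq hS _ j k, sum_const, card_univ, nsmul_eq_mul]

end Exchangeable

end Averaging

lemma ENNReal.ofReal_le_of_natCeil_le_mul {n : ℕ} (hn : n ≠ 0) {a : ℝ} {p : ℝ≥0∞}
    (h : (⌈n * a⌉₊ : ℝ≥0∞) ≤ n * p) : ENNReal.ofReal a ≤ p := by
  have hceil : (n : ℝ≥0∞) * ENNReal.ofReal a ≤ ⌈n * a⌉₊ := by
    rw [← ENNReal.ofReal_natCast n, ← ENNReal.ofReal_mul n.cast_nonneg, ← ENNReal.ofReal_natCast]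
    exact ENNReal.ofReal_le_ofReal (Nat.le_ceil _)
  exact (ENNReal.mul_le_mul_iff_right (by exact_mod_cast hn) (ENNReal.natCast_ne_top n)).1
    (hceil.trans h)

/-- Split conformal coverage: if `S₁,…,S_{m+1}` are exchangeable real-valued random
variables, `δ ∈ (0,1)`, and `q̂` is the `⌈(m+1)(1−δ)⌉`-th smallest of the first `m`
scores (with `q̂ = +∞` if `⌈(m+1)(1−δ)⌉ > m`), then `P(S_{m+1} ≤ q̂) ≥ 1 − δ`. -/
theorem split_conformal_coverage {Ω : Type*} [MeasurableSpace Ω]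
    (μ : Measure Ω) [IsProbabilityMeasure μ]
    (m : ℕ) (S : Fin (m + 1) → Ω → ℝ) (hmeas : ∀ i, Measurable (S i))
    (hexch : ∀ σ : Equiv.Perm (Fin (m + 1)),
      μ.map (fun ω => fun i => S (σ i) ω) = μ.map (fun ω => fun i => S i ω))
    (δ : ℝ) (hδ : δ ∈ Set.Ioo (0 : ℝ) 1)
    (qhat : Ω → EReal)
    (hq : qhat = fun ω =>
      if ⌈((m : ℝ) + 1) * (1 - δ)⌉₊ ≤ m then
        ((kthSmallest (fun i : Fin m => S i.castSucc ω) ⌈((m : ℝ) + 1) * (1 - δ)⌉₊ : ℝ) : EReal)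
      else ⊤) :
    ENNReal.ofReal (1 - δ) ≤ μ {ω | ((S (Fin.last m) ω : ℝ) : EReal) ≤ qhat ω} := by
  obtain ⟨hδ0, hδ1⟩ := hδ
  set k := ⌈((m : ℝ) + 1) * (1 - δ)⌉₊ with hk
  by_cases hkm : k ≤ m
  · have hk1 : 1 ≤ k := Nat.one_le_iff_ne_zero.2 <| by
      rw [hk, Ne, Nat.ceil_eq_zero, not_le]
      have : (0 : ℝ) ≤ m := m.cast_nonneg
      nlinarith
    have hevent : {ω | ((S (Fin.last m) ω : ℝ) : EReal) ≤ qhat ω} =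
        {ω | strictRank (S · ω) (Fin.last m) < k} := by
      ext ω
      simp only [hq, hkm, if_true, Set.mem_ofPred_eq, EReal.coe_le_coe_iff,
        le_kthSmallest_iff _ hk1 hkm, strictRank_last]
    have hcover := Exchangeable.mul_measure_univ_le_card_mul_measure_strictRank_lt hexch hmeas
      (Fin.last m) (k := k) (by rw [Fintype.card_fin]; omega)
    rw [hevent]
    refine ENNReal.ofReal_le_of_natCeil_le_mul m.succ_ne_zero ?_
    simpa [measure_univ] using hcover
  · have hevent : {ω | ((S (Fin.last m) ω : ℝ) : EReal) ≤ qhat ω} = Set.univ := by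
      simp [hq, hkm]
    rw [hevent, measure_univ]
    exact ENNReal.ofReal_le_one.2 (by linarith)
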